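/- Let (Ω, ℙ) be a probability space, let (Q_n) and (Q'_n) be sequences of real-valued random variables on Ω, and let (a_n) be a sequence of positive reals with a_n → ∞. Suppose that a_n·(Q_n − 1/2) converges in distribution to the standard normal law N(0,1), and that a_n·(Q_n + Q'_n − 1) converges to 0 in probability. Then a_n·(1/2 − min(Q_n, Q'_n)) converges in distribution to the half-normal law, i.e. to the pushforward of the standard Gaussian measure on ℝ under the absolute value map. -/

import Mathlib

/-!
Put `X n = aₙ (Qₙ - 1/2)`. Since `aₙ ≥ 0`, the statistic is `max (-X n) (-aₙ (Q'ₙ - 1/2))`, and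
`|X n| = max (-X n) (X n)`; as `X n - (-aₙ (Q'ₙ - 1/2)) = aₙ (Qₙ + Q'ₙ - 1)`, the two differ by at most
`|aₙ (Qₙ + Q'ₙ - 1)|`, which tends to `0` in probability. By the continuous mapping theorem `|X n|`
converges in distribution to `|N(0,1)|`, and so does the statistic, by Slutsky's lemma.
-/

open MeasureTheory Filter ProbabilityTheory BoundedContinuousFunction

theorem abs_max_neg_neg_sub_abs_le {α : Type*} [AddCommGroup α] [LinearOrder α]
    [IsOrderedAddMonoid α] (u v : α) : |max (-u) (-v) - (|u|)| ≤ |u + v| := by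
  rw [abs_eq_max_neg (a := u), max_comm (-u), ← sub_neg_eq_add, abs_sub_comm u]
  exact abs_max_sub_max_le_abs _ _ _

theorem abs_mul_half_sub_min_sub_abs_le {a : ℝ} (ha : 0 ≤ a) (q q' : ℝ) :
    |a * (1 / 2 - min q q') - (|a * (q - 1 / 2)|)| ≤ |a * (q + q' - 1)| := by
  have hmax : a * (1 / 2 - min q q') = max (-(a * (q - 1 / 2))) (-(a * (q' - 1 / 2))) := by
    rw [max_neg_neg, ← mul_min_of_nonneg _ _ ha, min_sub_sub_right]
    ring
  have hsum : a * (q + q' - 1) = a * (q - 1 / 2) + a * (q' - 1 / 2) := by ring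
  rw [hmax, hsum]
  exact abs_max_neg_neg_sub_abs_le _ _

theorem tendstoInMeasure_zero_of_norm_le {ι Ω E F : Type*} [MeasurableSpace Ω] {μ : Measure Ω}
    {l : Filter ι} [SeminormedAddCommGroup E] [SeminormedAddCommGroup F]
    {Y : ι → Ω → E} {B : ι → Ω → F} (hle : ∀ i ω, ‖Y i ω‖ ≤ ‖B i ω‖)
    (hB : ∀ ε : ℝ, 0 < ε → Tendsto (fun i => μ {ω | ε < ‖B i ω‖}) l (nhds 0)) :
    TendstoInMeasure μ Y l 0 := by
  rw [tendstoInMeasure_iff_norm]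
  intro ε hε
  refine tendsto_of_tendsto_of_tendsto_of_le_of_le tendsto_const_nhds (hB (ε / 2) (by positivity))
    (fun i => zero_le) (fun i => measure_mono fun ω hω => ?_)
  simp only [Set.mem_ofPred_eq, Pi.zero_apply, sub_zero] at hω ⊢
  linarith [hle i ω]

theorem tendstoInDistribution_iff_forall_integral_tendsto {ι Ω Ω' E : Type*}
    [MeasurableSpace Ω] [MeasurableSpace Ω'] {μ : Measure Ω} [IsProbabilityMeasure μ]
    {μ' : Measure Ω'} [IsProbabilityMeasure μ'] [TopologicalSpace E] [MeasurableSpace E]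
    [OpensMeasurableSpace E] {X : ι → Ω → E} {Z : Ω' → E} {l : Filter ι}
    (hX : ∀ i, AEMeasurable (X i) μ) (hZ : AEMeasurable Z μ') :
    TendstoInDistribution X l Z (fun _ => μ) μ' ↔ ∀ f : E →ᵇ ℝ,
      Tendsto (fun i => ∫ x, f x ∂(μ.map (X i))) l (nhds (∫ x, f x ∂(μ'.map Z))) :=
  ⟨fun h => ProbabilityMeasure.tendsto_iff_forall_integral_tendsto.1 h.tendsto,
    fun h => ⟨hX, hZ, ProbabilityMeasure.tendsto_iff_forall_integral_tendsto.2 h⟩⟩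

theorem min_statistic_halfNormal_general
    {Ω : Type*} [MeasureSpace Ω] [IsProbabilityMeasure (ℙ : Measure Ω)]
    (Q Q' : ℕ → Ω → ℝ) (hQmeas : ∀ n, Measurable (Q n)) (hQ'meas : ∀ n, Measurable (Q' n))
    (a : ℕ → ℝ) (ha_pos : ∀ n, 0 < a n)
    (hQdist : ∀ f : ℝ →ᵇ ℝ,
      Tendsto (fun n => ∫ x, f x ∂(Measure.map (fun ω => a n * (Q n ω - 1/2)) ℙ)) atTop
        (nhds (∫ x, f x ∂(gaussianReal 0 1))))
    (hprob : ∀ ε : ℝ, 0 < ε →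
      Tendsto (fun n => ℙ {ω | ε < |a n * (Q n ω + Q' n ω - 1)|}) atTop (nhds 0)) :
    ∀ f : ℝ →ᵇ ℝ,
      Tendsto (fun n => ∫ x, f x ∂(Measure.map (fun ω => a n * (1/2 - min (Q n ω) (Q' n ω))) ℙ))
        atTop
        (nhds (∫ x, f x ∂(Measure.map (fun x : ℝ => |x|) (gaussianReal 0 1)))) := by
  have hX : TendstoInDistribution (fun n ω => a n * (Q n ω - 1/2)) atTop id (fun _ => ℙ)
      (gaussianReal 0 1) := by
    rw [tendstoInDistribution_iff_forall_integral_tendsto (fun n => by fun_prop) (by fun_prop),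
      Measure.map_id]
    exact hQdist
  have hmin : TendstoInDistribution (fun n ω => a n * (1/2 - min (Q n ω) (Q' n ω))) atTop
      (abs ∘ id) (fun _ => ℙ) (gaussianReal 0 1) :=
    tendstoInDistribution_of_tendstoInMeasure_sub _ _ (hX.continuous_comp continuous_abs)
      (tendstoInMeasure_zero_of_norm_le (B := fun n ω => a n * (Q n ω + Q' n ω - 1))
        (fun n ω => abs_mul_half_sub_min_sub_abs_le (ha_pos n).le (Q n ω) (Q' n ω)) hprob)
      (fun n => by fun_prop)
  exact (tendstoInDistribution_iff_forall_integral_tendsto (fun n => by fun_prop)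
    (by fun_prop)).1 hmin

/-- The minimum statistic is asymptotically half-normal: if `aₙ (Qₙ - 1/2)` converges in
distribution to `N(0,1)` and `aₙ (Qₙ + Q'ₙ - 1)` converges to `0` in probability, then
`aₙ (1/2 - min Qₙ Q'ₙ)` converges in distribution to the half-normal law, i.e. the pushforward
of the standard Gaussian measure under the absolute value map. -/
theorem min_statistic_halfNormal
    {Ω : Type*} [MeasureSpace Ω] [IsProbabilityMeasure (ℙ : Measure Ω)]
    (Q Q' : ℕ → Ω → ℝ) (hQmeas : ∀ n, Measurable (Q n)) (hQ'meas : ∀ n, Measurable (Q' n))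
    (a : ℕ → ℝ) (ha_pos : ∀ n, 0 < a n) (ha : Tendsto a atTop atTop)
    (hQdist : ∀ f : ℝ →ᵇ ℝ,
      Tendsto (fun n => ∫ x, f x ∂(Measure.map (fun ω => a n * (Q n ω - 1/2)) ℙ)) atTop
        (nhds (∫ x, f x ∂(gaussianReal 0 1))))
    (hprob : ∀ ε : ℝ, 0 < ε →
      Tendsto (fun n => ℙ {ω | ε < |a n * (Q n ω + Q' n ω - 1)|}) atTop (nhds 0)) :
    ∀ f : ℝ →ᵇ ℝ,
      Tendsto (fun n => ∫ x, f x ∂(Measure.map (fun ω => a n * (1/2 - min (Q n ω) (Q' n ω))) ℙ))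
        atTop
        (nhds (∫ x, f x ∂(Measure.map (fun x : ℝ => |x|) (gaussianReal 0 1)))) :=
  min_statistic_halfNormal_general Q Q' hQmeas hQ'meas a ha_pos hQdist hprob
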